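/- Let (Ω, 𝓕, P) be a probability space and let X, v, ζ : Ω → ℝ^{d×r} be random matrices such that, almost surely: X ∈ St(d,r); ζ ∈ T_X is the minimizer over T_X of φ(ζ') = ⟨v, ζ'⟩ + (1/(2γ))‖ζ'‖² + h(X + ζ'); f(Retr_X(ηζ)) ≤ f(X) + η⟨∇f(X), ζ⟩ + (L_R η²/2)‖ζ‖²; and ‖Retr_X(ηζ) − (X + ηζ)‖ ≤ M₂ η² ‖ζ‖², where Retr is the polar retraction. Assume η ∈ (0,1], 0 < γ < 2, L_R, L_h, M₂ > 0, B ≥ 0, h : ℝ^{d×r} → ℝ is convex and L_h-Lipschitz, f : ℝ^{d×r} → ℝ is differentiable, F = f + h, all the indicated expectations are finite, and E[‖v − ∇f(X)‖²] ≤ B. Then E[F(Retr_X(ηζ)) − F(X)] ≤ η(L̃η − 1/γ̃) E[‖ζ‖²] + (η/2)B, where L̃ = L_R/2 + L_h M₂ and γ̃ = 2γ/(2 − γ). -/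

import Mathlib

open Matrix MeasureTheory Finset

noncomputable section

/-- The space of real `d × r` matrices. -/
abbrev Mat (d r : ℕ) := Matrix (Fin d) (Fin r) ℝ

/-- The Frobenius inner product `⟨A, B⟩ = tr(Aᵀ B)`. -/
def finner {d r : ℕ} (A B : Mat d r) : ℝ := (Aᵀ * B).trace

/-- The Stiefel manifold `St(d,r) = {X : Xᵀ X = I}`. -/
def Stiefel {d r : ℕ} (X : Mat d r) : Prop := Xᵀ * X = 1

/-- The tangent space to the Stiefel manifold at `X`:
`T_X = {ζ : ζᵀ X + Xᵀ ζ = 0}`. -/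
def TangentAt {d r : ℕ} (X : Mat d r) : Set (Mat d r) :=
  {ζ | ζᵀ * X + Xᵀ * ζ = 0}

lemma posSemidef_one_add_transpose_mul_self {d r : ℕ} (ξ : Mat d r) :
    (1 + ξᵀ * ξ).PosSemidef := by
  have h := Matrix.posSemidef_conjTranspose_mul_self ξ
  rw [Matrix.conjTranspose_eq_transpose_of_trivial] at h
  exact Matrix.PosSemidef.one.add h

/-- The positive semidefinite square root of a positive semidefinite matrix
(the definition `Matrix.PosSemidef.sqrt` of the older Mathlib, since removed). -/
def Matrix.PosSemidef.sqrt {n 𝕜 : Type*} [Fintype n] [RCLike 𝕜] [PartialOrder 𝕜] [StarOrderedRing 𝕜] [DecidableEq n]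
    {A : Matrix n n 𝕜} (hA : A.PosSemidef) : Matrix n n 𝕜 :=
  hA.1.eigenvectorUnitary.1 * diagonal ((↑) ∘ (√·) ∘ hA.1.eigenvalues) *
    (star hA.1.eigenvectorUnitary : Matrix n n 𝕜)

/-- The polar retraction `Retr_X(ξ) = (X + ξ)(I + ξᵀ ξ)^{-1/2}`, where the square root
is the unique positive-semidefinite (here positive-definite) square root. -/
def polarRetr {d r : ℕ} (X ξ : Mat d r) : Mat d r :=
  (X + ξ) * ((posSemidef_one_add_transpose_mul_self ξ).sqrt)⁻¹

/- Equip matrices with the Frobenius norm (the norm induced by `finner`). -/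
attribute [local instance] Matrix.frobeniusNormedAddCommGroup Matrix.frobeniusNormedSpace

/-- The subproblem objective `φ(ζ) = ⟨v, ζ⟩ + (1/(2γ))‖ζ‖² + h(X + ζ)`. -/
def phi {d r : ℕ} (γ : ℝ) (h : Mat d r → ℝ) (X v ζ : Mat d r) : ℝ :=
  finner v ζ + (1 / (2 * γ)) * ‖ζ‖ ^ 2 + h (X + ζ)

/-- `ζ` is a minimizer of `phi γ h X v` over the tangent space at `X`. -/
def IsSubMin {d r : ℕ} (γ : ℝ) (h : Mat d r → ℝ) (X v ζ : Mat d r) : Prop :=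
  ζ ∈ TangentAt X ∧ ∀ ζ' ∈ TangentAt X, phi γ h X v ζ ≤ phi γ h X v ζ'

lemma finner_eq_sum {d r : ℕ} (A B : Mat d r) :
    finner A B = ∑ i, ∑ j, A i j * B i j := by
  unfold finner
  rw [Matrix.trace]
  simp_rw [Matrix.diag_apply, Matrix.mul_apply, Matrix.transpose_apply]
  exact Finset.sum_comm

lemma frob_norm_sq {d r : ℕ} (A : Mat d r) : ‖A‖ ^ 2 = ∑ i, ∑ j, (A i j) ^ 2 := by
  have hnn : (0:ℝ) ≤ ∑ i, ∑ j, ‖A i j‖ ^ (2:ℝ) := by positivity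
  rw [Matrix.frobenius_norm_def, ← Real.rpow_natCast _ 2, ← Real.rpow_mul hnn]
  norm_num

lemma finner_smul_right {d r : ℕ} (A B : Mat d r) (t : ℝ) :
    finner A (t • B) = t * finner A B := by
  simp [finner_eq_sum, Finset.mul_sum, mul_left_comm]

lemma finner_sub_left {d r : ℕ} (A B C : Mat d r) :
    finner (A - B) C = finner A C - finner B C := by
  simp [finner_eq_sum, sub_mul, Finset.sum_sub_distrib]

lemma frob_norm_sub_sq {d r : ℕ} (A B : Mat d r) :
    ‖A - B‖ ^ 2 = ‖A‖ ^ 2 - 2 * finner A B + ‖B‖ ^ 2 := by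
  rw [frob_norm_sq, frob_norm_sq, frob_norm_sq, finner_eq_sum, Finset.mul_sum]
  simp_rw [Finset.mul_sum]
  rw [← Finset.sum_sub_distrib, ← Finset.sum_add_distrib]
  refine Finset.sum_congr rfl fun i _ => ?_
  rw [← Finset.sum_sub_distrib, ← Finset.sum_add_distrib]
  refine Finset.sum_congr rfl fun j _ => ?_
  simp [Matrix.sub_apply]
  ring

lemma two_finner_le {d r : ℕ} (A B : Mat d r) :
    2 * finner A B ≤ ‖A‖ ^ 2 + ‖B‖ ^ 2 := by
  have h := frob_norm_sub_sq A B
  nlinarith [sq_nonneg ‖A - B‖]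

lemma tangent_smul {d r : ℕ} {X ζ : Mat d r} (hζ : ζ ∈ TangentAt X) (t : ℝ) :
    t • ζ ∈ TangentAt X := by
  simp only [TangentAt, Set.mem_setOf_eq] at hζ ⊢
  rw [Matrix.transpose_smul, Matrix.smul_mul, Matrix.mul_smul, ← smul_add, hζ, smul_zero]

lemma submin_key {d r : ℕ} {γ : ℝ} (hγ0 : 0 < γ) {h : Mat d r → ℝ}
    (hconv : ConvexOn ℝ Set.univ h) {X v ζ : Mat d r}
    (hsub : IsSubMin γ h X v ζ) :
    finner v ζ + h (X + ζ) - h X ≤ -(1/γ) * ‖ζ‖ ^ 2 := by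
  obtain ⟨hζT, hmin⟩ := hsub
  have hs : (0:ℝ) ≤ ‖ζ‖ ^ 2 := sq_nonneg _
  have key : ∀ t : ℝ, 0 < t → t < 1 →
      finner v ζ + h (X + ζ) - h X ≤ -(1/γ) * ‖ζ‖ ^ 2 + (1/(2*γ)) * ‖ζ‖ ^ 2 * t := by
    intro t ht0 ht1
    have hmem : (1 - t) • ζ ∈ TangentAt X := tangent_smul hζT _
    have h1 := hmin _ hmem
    unfold phi at h1
    rw [finner_smul_right, norm_smul, Real.norm_eq_abs,
      abs_of_nonneg (by linarith : (0:ℝ) ≤ 1 - t)] at h1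
    have hrw : ((1 - t) * ‖ζ‖) ^ 2 = (1 - t)^2 * ‖ζ‖ ^ 2 := by ring
    rw [hrw] at h1
    have hc : h (X + (1 - t) • ζ) ≤ (1 - t) * h (X + ζ) + t * h X := by
      have hcv := hconv.2 (Set.mem_univ (X + ζ)) (Set.mem_univ X)
        (by linarith : (0:ℝ) ≤ 1 - t) ht0.le (by ring)
      have heq : (1 - t) • (X + ζ) + t • X = X + (1 - t) • ζ := by
        rw [smul_add]
        rw [add_assoc, add_comm ((1-t) • ζ) (t • X), ← add_assoc, ← add_smul]
        norm_num
      rwa [heq] at hcv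
    have h2c : 1/γ = 2 * (1/(2*γ)) := by field_simp
    have h2 : t * (finner v ζ + h (X + ζ) - h X) ≤
        t * (-(1/γ) * ‖ζ‖ ^ 2 + (1/(2*γ)) * ‖ζ‖ ^ 2 * t) := by
      rw [h2c]
      nlinarith [h1, hc]
    exact le_of_mul_le_mul_left h2 ht0
  refine le_of_forall_pos_le_add ?_
  intro ε hε
  set c := (1/(2*γ)) * ‖ζ‖ ^ 2 with hc_def
  have hc0 : 0 ≤ c := by positivity
  set t := min (1/2 : ℝ) (ε / (c + 1)) with ht_def
  have ht0 : 0 < t := lt_min (by norm_num) (by positivity)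
  have ht1 : t < 1 := lt_of_le_of_lt (min_le_left _ _) (by norm_num)
  have hk := key t ht0 ht1
  have htc : c * t ≤ ε := by
    have h5 : t ≤ ε / (c + 1) := min_le_right _ _
    have h6 : c * t ≤ c * (ε / (c + 1)) := mul_le_mul_of_nonneg_left h5 hc0
    have h7 : c * (ε / (c + 1)) ≤ ε := by
      rw [mul_div_assoc', div_le_iff₀ (by linarith : (0:ℝ) < c + 1)]
      nlinarith
    linarith
  have hcc : (1/(2*γ)) * ‖ζ‖ ^ 2 * t = c * t := by rw [hc_def]
  linarith

/-- expected one-step descent for R-ProxSPB: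
`E[F(Retr_X(ηζ)) − F(X)] ≤ η(L̃η − 1/γ̃) E[‖ζ‖²] + (η/2)B`,
with `L̃ = L_R/2 + L_h M₂` and `γ̃ = 2γ/(2 − γ)`. -/
theorem expected_descent_RProxSPB {d r : ℕ}
    {Ω : Type*} [MeasurableSpace Ω] (P : Measure Ω) [IsProbabilityMeasure P]
    (γ η L_R L_h M₂ B : ℝ)
    (hη0 : 0 < η) (hη1 : η ≤ 1) (hγ0 : 0 < γ) (hγ2 : γ < 2)
    (hLR : 0 < L_R) (hLh : 0 < L_h) (hM₂ : 0 < M₂) (hB : 0 ≤ B)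
    (f h : Mat d r → ℝ)
    (hconv : ConvexOn ℝ Set.univ h)
    (hlip : ∀ A B' : Mat d r, |h A - h B'| ≤ L_h * ‖A - B'‖)
    (hdiff : Differentiable ℝ f)
    (Gf : Mat d r → Mat d r)
    (hgrad : ∀ Y u : Mat d r, (fderiv ℝ f Y) u = finner (Gf Y) u)
    (X v ζ : Ω → Mat d r)
    (has : ∀ᵐ ω ∂P, Stiefel (X ω) ∧ IsSubMin γ h (X ω) (v ω) (ζ ω) ∧
      f (polarRetr (X ω) (η • ζ ω)) ≤
        f (X ω) + η * finner (Gf (X ω)) (ζ ω) + (L_R * η ^ 2 / 2) * ‖ζ ω‖ ^ 2 ∧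
      ‖polarRetr (X ω) (η • ζ ω) - (X ω + η • ζ ω)‖ ≤ M₂ * η ^ 2 * ‖ζ ω‖ ^ 2)
    (hint1 : Integrable (fun ω =>
      f (polarRetr (X ω) (η • ζ ω)) + h (polarRetr (X ω) (η • ζ ω))) P)
    (hint2 : Integrable (fun ω => f (X ω) + h (X ω)) P)
    (hint3 : Integrable (fun ω => ‖ζ ω‖ ^ 2) P)
    (hint4 : Integrable (fun ω => ‖v ω - Gf (X ω)‖ ^ 2) P)
    (hvar : ∫ ω, ‖v ω - Gf (X ω)‖ ^ 2 ∂P ≤ B) :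
    ∫ ω, ((f (polarRetr (X ω) (η • ζ ω)) + h (polarRetr (X ω) (η • ζ ω)))
        - (f (X ω) + h (X ω))) ∂P ≤
      η * ((L_R / 2 + L_h * M₂) * η - 1 / (2 * γ / (2 - γ))) * (∫ ω, ‖ζ ω‖ ^ 2 ∂P)
        + (η / 2) * B := by
  set C := η * ((L_R / 2 + L_h * M₂) * η - 1 / (2 * γ / (2 - γ))) with hC_def
  have hγ2' : (0:ℝ) < 2 - γ := by linarith
  have hginv : 1 / (2 * γ / (2 - γ)) = 1/γ - 1/2 := by
    rw [one_div_div]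
    rw [div_sub_div _ _ (ne_of_gt hγ0) (two_ne_zero), div_eq_div_iff (by positivity) (by positivity)]
    ring
  have hpt : ∀ᵐ ω ∂P,
      (f (polarRetr (X ω) (η • ζ ω)) + h (polarRetr (X ω) (η • ζ ω)))
        - (f (X ω) + h (X ω)) ≤
      C * ‖ζ ω‖ ^ 2 + (η / 2) * ‖v ω - Gf (X ω)‖ ^ 2 := by
    filter_upwards [has] with ω hω
    obtain ⟨_, hsub, hfdesc, hretr⟩ := hω
    set R := polarRetr (X ω) (η • ζ ω) with hR_def
    have hb1 : h R - h (X ω + η • ζ ω) ≤ L_h * (M₂ * η^2 * ‖ζ ω‖ ^ 2) :=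
      calc h R - h (X ω + η • ζ ω) ≤ |h R - h (X ω + η • ζ ω)| := le_abs_self _
        _ ≤ L_h * ‖R - (X ω + η • ζ ω)‖ := hlip _ _
        _ ≤ L_h * (M₂ * η^2 * ‖ζ ω‖ ^ 2) := mul_le_mul_of_nonneg_left hretr hLh.le
    have hb2 : h (X ω + η • ζ ω) ≤ η * h (X ω + ζ ω) + (1 - η) * h (X ω) := by
      have hcv := hconv.2 (Set.mem_univ (X ω + ζ ω)) (Set.mem_univ (X ω))
        hη0.le (by linarith : (0:ℝ) ≤ 1 - η) (by ring)
      have heq : η • (X ω + ζ ω) + (1 - η) • X ω = X ω + η • ζ ω := by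
        rw [smul_add]
        rw [add_assoc, add_comm (η • ζ ω) ((1 - η) • X ω), ← add_assoc, ← add_smul]
        norm_num
      rwa [heq] at hcv
    have hb3 := submin_key hγ0 hconv hsub
    have hb4 : finner (Gf (X ω)) (ζ ω) ≤ finner (v ω) (ζ ω)
        + (1/2) * ‖v ω - Gf (X ω)‖ ^ 2 + (1/2) * ‖ζ ω‖ ^ 2 := by
      have h6 := two_finner_le (Gf (X ω) - v ω) (ζ ω)
      rw [finner_sub_left, norm_sub_rev] at h6
      linarith
    have H1 : η * finner (Gf (X ω)) (ζ ω) ≤ η * (finner (v ω) (ζ ω)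
        + (1/2) * ‖v ω - Gf (X ω)‖ ^ 2 + (1/2) * ‖ζ ω‖ ^ 2) :=
      mul_le_mul_of_nonneg_left hb4 hη0.le
    have H2 : η * (finner (v ω) (ζ ω) + h (X ω + ζ ω) - h (X ω)) ≤
        η * (-(1/γ) * ‖ζ ω‖ ^ 2) := mul_le_mul_of_nonneg_left hb3 hη0.le
    rw [hC_def, hginv]
    nlinarith [hfdesc, hb1, hb2, H1, H2]
  have hC1 : Integrable (fun ω => C * ‖ζ ω‖ ^ 2) P := hint3.const_mul C
  have hC2 : Integrable (fun ω => (η/2) * ‖v ω - Gf (X ω)‖ ^ 2) P := hint4.const_mul (η/2)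
  have hmono := integral_mono_ae (hint1.sub hint2) (hC1.add hC2) hpt
  have heq : ∫ ω, (C * ‖ζ ω‖ ^ 2 + (η/2) * ‖v ω - Gf (X ω)‖ ^ 2) ∂P
      = C * ∫ ω, ‖ζ ω‖ ^ 2 ∂P + (η/2) * ∫ ω, ‖v ω - Gf (X ω)‖ ^ 2 ∂P := by
    rw [integral_add hC1 hC2, integral_const_mul, integral_const_mul]
  simp only [Pi.add_apply, Pi.sub_apply] at hmono
  rw [heq] at hmono
  have hfin : (η/2) * ∫ ω, ‖v ω - Gf (X ω)‖ ^ 2 ∂P ≤ (η/2) * B :=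
    mul_le_mul_of_nonneg_left hvar (by positivity)
  calc ∫ ω, ((f (polarRetr (X ω) (η • ζ ω)) + h (polarRetr (X ω) (η • ζ ω)))
        - (f (X ω) + h (X ω))) ∂P
      ≤ C * ∫ ω, ‖ζ ω‖ ^ 2 ∂P + (η/2) * ∫ ω, ‖v ω - Gf (X ω)‖ ^ 2 ∂P := hmono
    _ ≤ C * ∫ ω, ‖ζ ω‖ ^ 2 ∂P + (η/2) * B := by linarith
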